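/- arXiv:1203.5920 — 5 statements merged into one kernel-verified Lean document; each statement's English description precedes it below -/
import Mathlib

section
/- Let w₀, w₁, …, wₙ be positive integers and define the sequence a : ℕ → ℕ^{n+1} by a(0) = (0,…,0) and a(k+1) = a(k) + e_{i(k)}, where e_j is the j-th standard basis vector and i(k) is the smallest index i minimizing the rational number a(k)_i / w_i. Set μ = w₀ + w₁ + ⋯ + wₙ. Then Σ_{i=0}^{n} a(k)_i = k for every k, and a(μ)_i = w_i for every i = 0, …, n. -/
/-- Properties of the greedy combinatorial sequence `a(k)` of section 7.1:
`Σᵢ a(k)ᵢ = k` for every `k`, and `a(μ) = (w₀, …, wₙ)` where `μ = Σ wᵢ`. -/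
theorem greedy_sequence_properties {n : ℕ}
    (w : Fin (n + 1) → ℕ) (hw : ∀ j, 0 < w j)
    (a : ℕ → Fin (n + 1) → ℕ) (i : ℕ → Fin (n + 1))
    (ha0 : a 0 = 0)
    (hmin : ∀ k j, (a k (i k) : ℚ) / (w (i k) : ℚ) ≤ (a k j : ℚ) / (w j : ℚ))
    (hleast : ∀ k j,
      (a k j : ℚ) / (w j : ℚ) = (a k (i k) : ℚ) / (w (i k) : ℚ) → i k ≤ j)
    (hstep : ∀ k, a (k + 1) = a k + Pi.single (i k) 1) :
    (∀ k, ∑ j, a k j = k) ∧ (∀ j, a (∑ j, w j) j = w j) := by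
  have hsum : ∀ k, ∑ j, a k j = k := by
    intro k
    induction k with
    | zero => simp [ha0]
    | succ k ih =>
      rw [hstep k]
      simp [Finset.sum_add_distrib, ih, Finset.sum_pi_single]
  refine ⟨hsum, ?_⟩
  set μ := ∑ j, w j with hμ
  -- invariant: a k j ≤ w j for k ≤ μ
  have hbound : ∀ k, k ≤ μ → ∀ j, a k j ≤ w j := by
    intro k
    induction k with
    | zero => intro _ j; simp [ha0]
    | succ k ih =>
      intro hk j
      have hk' : k < μ := Nat.lt_of_succ_le hk
      have ihk := ih (le_of_lt hk')
      -- there is j₀ with a k j₀ < w j₀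
      have hex : ∃ j₀, a k j₀ < w j₀ := by
        by_contra h
        push_neg at h
        have : μ ≤ k := by
          rw [← hsum k, hμ]
          exact Finset.sum_le_sum fun j _ => h j
        omega
      obtain ⟨j₀, hj₀⟩ := hex
      -- chosen index is strictly below its weight
      have hik : a k (i k) < w (i k) := by
        have h1 : (a k (i k) : ℚ) / (w (i k) : ℚ) < 1 := by
          refine lt_of_le_of_lt (hmin k j₀) ?_
          rw [div_lt_one (by exact_mod_cast hw j₀)]
          exact_mod_cast hj₀
        have h2 : (a k (i k) : ℚ) < (w (i k) : ℚ) := by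
          rwa [div_lt_one (by exact_mod_cast hw (i k))] at h1
        exact_mod_cast h2
      rw [hstep k]
      by_cases hji : j = i k
      · subst hji
        simp only [Pi.add_apply, Pi.single_eq_same]
        omega
      · simp only [Pi.add_apply, Pi.single_eq_of_ne hji]
        simpa using ihk j
  -- at k = μ the sum forces equality
  have hle : ∀ j, a μ j ≤ w j := hbound μ le_rfl
  have hsumeq : ∑ j, a μ j = ∑ j, w j := by rw [hsum μ]
  intro j
  by_contra hne
  have hlt : a μ j < w j := lt_of_le_of_ne (hle j) hne
  have : ∑ j, a μ j < ∑ j, w j :=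
    Finset.sum_lt_sum (fun j _ => hle j) ⟨j, Finset.mem_univ j, hlt⟩
  omega
end

section
/- Let w₀, w₁, …, wₙ be positive integers, let a : ℕ → ℕ^{n+1} be the sequence defined by a(0) = (0,…,0) and a(k+1) = a(k) + e_{i(k)}, where i(k) is the smallest index i minimizing a(k)_i / w_i, and set μ = w₀ + ⋯ + wₙ and c_k = min_{0 ≤ i ≤ n} a(k)_i / w_i ∈ ℚ. Then the multiset {c_k : 0 ≤ k ≤ μ−1} equals the multiset {i / w_j : 0 ≤ j ≤ n, 0 ≤ i ≤ w_j − 1}. In particular c_k ∈ [0, 1) for all 0 ≤ k ≤ μ−1, and each value f in this set occurs exactly d_f := #{j : w_j·f ∈ ℤ} times. -/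
/-- The sequence `c₀, …, c_{μ-1}` of section 7.1: as a multiset,
`{c_k : 0 ≤ k ≤ μ-1}` equals `{i/w_j : 0 ≤ j ≤ n, 0 ≤ i ≤ w_j - 1}`;
in particular each `c_k` lies in `[0,1)`. -/
theorem greedy_sequence_min_multiset {n : ℕ}
    (w : Fin (n + 1) → ℕ) (hw : ∀ j, 0 < w j)
    (a : ℕ → Fin (n + 1) → ℕ) (i : ℕ → Fin (n + 1))
    (ha0 : a 0 = 0)
    (hmin : ∀ k j, (a k (i k) : ℚ) / (w (i k) : ℚ) ≤ (a k j : ℚ) / (w j : ℚ))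
    (hleast : ∀ k j,
      (a k j : ℚ) / (w j : ℚ) = (a k (i k) : ℚ) / (w (i k) : ℚ) → i k ≤ j)
    (hstep : ∀ k, a (k + 1) = a k + Pi.single (i k) 1)
    (c : ℕ → ℚ) (hc : ∀ k, c k = (a k (i k) : ℚ) / (w (i k) : ℚ)) :
    (Multiset.range (∑ j, w j)).map c
        = ∑ j : Fin (n + 1), (Multiset.range (w j)).map (fun m => (m : ℚ) / (w j : ℚ)) ∧
    ∀ k < ∑ j, w j, 0 ≤ c k ∧ c k < 1 := by
  have hsum : ∀ k, ∑ j, a k j = k := by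
    intro k
    induction k with
    | zero => simp [ha0]
    | succ k ih =>
      rw [hstep k]
      simp [Finset.sum_add_distrib, ih]
  have hlt : ∀ k, k < ∑ j, w j → a k (i k) < w (i k) := by
    intro k hk
    by_contra h
    push_neg at h
    have hall : ∀ j, w j ≤ a k j := by
      intro j
      have h1 := hmin k j
      have hw1 : (1 : ℚ) ≤ (a k (i k) : ℚ) / (w (i k) : ℚ) := by
        rw [le_div_iff₀ (by exact_mod_cast hw (i k))]
        simpa using (Nat.cast_le (α := ℚ)).2 h
      have h2 : (1 : ℚ) ≤ (a k j : ℚ) / (w j : ℚ) := le_trans hw1 h1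
      rw [le_div_iff₀ (by exact_mod_cast hw j)] at h2
      exact_mod_cast by simpa using h2
    have : ∑ j, w j ≤ ∑ j, a k j := Finset.sum_le_sum fun j _ => hall j
    rw [hsum] at this
    omega
  have hle : ∀ k, k ≤ ∑ j, w j → ∀ j, a k j ≤ w j := by
    intro k
    induction k with
    | zero => intro _ j; simp [ha0]
    | succ k ih =>
      intro hk j
      have hk' : k < ∑ j, w j := hk
      have h1 := hlt k hk'
      have h2 := ih (le_of_lt hk')
      rw [hstep k]
      simp only [Pi.add_apply, Pi.single_apply]
      by_cases hj : i k = j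
      · subst hj; simpa using h1
      · simp [Ne.symm hj, h2 j]
  have haμ : ∀ j, a (∑ j, w j) j = w j := by
    intro j
    by_contra hne
    have hlt' : a (∑ j, w j) j < w j :=
      lt_of_le_of_ne (hle _ le_rfl j) hne
    have : ∑ j', a (∑ j, w j) j' < ∑ j', w j' :=
      Finset.sum_lt_sum (fun j' _ => hle _ le_rfl j') ⟨j, Finset.mem_univ j, hlt'⟩
    rw [hsum] at this
    omega
  have hM : ∀ k, (Multiset.range k).map c
      = ∑ j : Fin (n + 1), (Multiset.range (a k j)).map (fun m => (m : ℚ) / (w j : ℚ)) := by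
    intro k
    induction k with
    | zero => simp [ha0]
    | succ k ih =>
      have key : ∀ j, (Multiset.range (a (k + 1) j)).map (fun m => (m : ℚ) / (w j : ℚ))
          = (if j = i k then ({c k} : Multiset ℚ) else 0)
            + (Multiset.range (a k j)).map (fun m => (m : ℚ) / (w j : ℚ)) := by
        intro j
        by_cases hj : j = i k
        · subst hj
          have h2 : a (k + 1) (i k) = a k (i k) + 1 := by rw [hstep k]; simp
          simp [h2, Multiset.range_succ, hc k, Multiset.singleton_add]
        · have : a (k + 1) j = a k j := by
            rw [hstep k]; simp [Pi.single_apply, Ne.symm hj]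
          simp [this, hj]
      rw [Multiset.range_succ, Multiset.map_cons, ih]
      calc (c k) ::ₘ ∑ j : Fin (n + 1), (Multiset.range (a k j)).map (fun m => (m : ℚ) / (w j : ℚ))
          = ({c k} : Multiset ℚ) + ∑ j : Fin (n + 1), (Multiset.range (a k j)).map (fun m => (m : ℚ) / (w j : ℚ)) := by
            rw [Multiset.singleton_add]
        _ = (∑ j : Fin (n + 1), if j = i k then ({c k} : Multiset ℚ) else 0)
            + ∑ j : Fin (n + 1), (Multiset.range (a k j)).map (fun m => (m : ℚ) / (w j : ℚ)) := by
            rw [Finset.sum_ite_eq' Finset.univ (i k) (fun _ => ({c k} : Multiset ℚ))]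
            simp
        _ = ∑ j : Fin (n + 1), ((if j = i k then ({c k} : Multiset ℚ) else 0)
            + (Multiset.range (a k j)).map (fun m => (m : ℚ) / (w j : ℚ))) := by
            rw [Finset.sum_add_distrib]
        _ = ∑ j : Fin (n + 1), (Multiset.range (a (k + 1) j)).map (fun m => (m : ℚ) / (w j : ℚ)) := by
            exact Finset.sum_congr rfl fun j _ => (key j).symm
  constructor
  · rw [hM (∑ j, w j)]
    exact Finset.sum_congr rfl fun j _ => by rw [haμ j]
  · intro k hk
    have h1 := hlt k hk
    have hwpos : (0 : ℚ) < (w (i k) : ℚ) := by exact_mod_cast hw (i k)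
    constructor
    · rw [hc k]; positivity
    · rw [hc k, div_lt_one hwpos]
      exact_mod_cast h1
end

section
/- Let q₁, q₂ ∈ ℂ with q₁ ≠ 0, q₁ ≠ 1/4 and q₂ ≠ 0, and let f(u₁,u₂) = u₁ + u₂ + q₁u₂²/u₁ + q₂/u₂ on (ℂ*)². Then the set of critical points of f, i.e. the set of (u₁,u₂) with u₁ ≠ 0, u₂ ≠ 0 satisfying 1 − q₁u₂²/u₁² = 0 and 1 + 2q₁u₂/u₁ − q₂/u₂² = 0, has exactly four elements, and at each of these points the Hessian determinant (∂²f/∂u₁²)(∂²f/∂u₂²) − (∂²f/∂u₁∂u₂)² = (2q₁u₂²/u₁³)(2q₁/u₁ + 2q₂/u₂³) − (2q₁u₂/u₁²)² is nonzero. -/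
/-!
Writing `u₁ = a u₂`, the first critical equation says `a² = q₁` and the second then says
`u₂² (1 + 2a) = q₂`. So the critical locus is fibred over the two square roots `a = ±√q₁`, and
since `q₁ ≠ 1/4` forces `1 + 2a ≠ 0`, each fibre consists of the two square roots of
`q₂ / (1 + 2a)`. On the torus the Hessian determinant of `f` simplifies to `4 q₁ q₂ / (u₁³ u₂)`,
which never vanishes.
-/

open Set

section

variable {K : Type*} [Field K]

lemma setOf_sq_eq_sq (e : K) : {x : K | x ^ 2 = e ^ 2} = {e, -e} := by
  ext x
  simp [sq_eq_sq_iff_eq_or_eq_neg]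

lemma self_ne_neg_of_ne_zero [NeZero (2 : K)] {e : K} (he : e ≠ 0) : e ≠ -e := by
  intro h
  have h2e : 2 * e = 0 := by linear_combination h
  exact he ((mul_eq_zero.mp h2e).resolve_left two_ne_zero)

lemma ncard_setOf_sq_eq [IsAlgClosed K] [NeZero (2 : K)] {c : K} (hc : c ≠ 0) :
    {x : K | x ^ 2 = c}.ncard = 2 := by
  obtain ⟨e, rfl⟩ := IsAlgClosed.exists_pow_nat_eq c two_pos
  rw [setOf_sq_eq_sq, ncard_pair (self_ne_neg_of_ne_zero (by rintro rfl; simp at hc))]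

/-- The critical points on the torus of `f(u₁, u₂) = u₁ + u₂ + q₁ u₂² / u₁ + q₂ / u₂`. -/
def criticalLocus (q₁ q₂ : K) : Set (K × K) :=
  {p | p.1 ≠ 0 ∧ p.2 ≠ 0 ∧ 1 - q₁ * p.2 ^ 2 / p.1 ^ 2 = 0 ∧
    1 + 2 * q₁ * p.2 / p.1 - q₂ / p.2 ^ 2 = 0}

def criticalBranch (q₂ a : K) : Set (K × K) :=
  (fun b ↦ (a * b, b)) '' {b | b ^ 2 * (1 + 2 * a) = q₂}

variable {q₁ q₂ : K}

lemma mem_criticalLocus_iff (hq₁ : q₁ ≠ 0) (hq₂ : q₂ ≠ 0) {u₁ u₂ : K} :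
    (u₁, u₂) ∈ criticalLocus q₁ q₂ ↔
      ∃ a, a ^ 2 = q₁ ∧ u₁ = a * u₂ ∧ u₂ ^ 2 * (1 + 2 * a) = q₂ := by
  simp only [criticalLocus, mem_ofPred_eq]
  constructor
  · rintro ⟨hu₁, hu₂, h₁, h₂⟩
    field_simp at h₁ h₂
    refine ⟨u₁ / u₂, by field_simp; linear_combination h₁, by field_simp, ?_⟩
    field_simp
    apply mul_left_cancel₀ hu₁
    linear_combination h₂ + 2 * u₂ * h₁
  · rintro ⟨a, rfl, rfl, h⟩
    have ha : a ≠ 0 := by rintro rfl; simp at hq₁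
    have hu₂ : u₂ ≠ 0 := by rintro rfl; simp [eq_comm, hq₂] at h
    refine ⟨mul_ne_zero ha hu₂, hu₂, by field_simp; ring, ?_⟩
    field_simp
    linear_combination h

lemma criticalLocus_eq_biUnion (hq₁ : q₁ ≠ 0) (hq₂ : q₂ ≠ 0) :
    criticalLocus q₁ q₂ = ⋃ a ∈ {a : K | a ^ 2 = q₁}, criticalBranch q₂ a := by
  ext ⟨u₁, u₂⟩
  simp only [mem_criticalLocus_iff hq₁ hq₂, criticalBranch, mem_iUnion, mem_image, mem_ofPred_eq,
    Prod.mk.injEq, exists_prop]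
  constructor
  · rintro ⟨a, ha, rfl, h⟩
    exact ⟨a, ha, u₂, h, rfl, rfl⟩
  · rintro ⟨a, ha, b, h, rfl, rfl⟩
    exact ⟨a, ha, rfl, h⟩

lemma pairwiseDisjoint_criticalBranch (hq₂ : q₂ ≠ 0) (s : Set K) :
    s.PairwiseDisjoint (criticalBranch q₂) := by
  intro a _ a' _ hne
  refine disjoint_left.mpr ?_
  rintro _ ⟨b', -, rfl⟩ ⟨b, hb, h⟩
  obtain ⟨hab, rfl⟩ := Prod.ext_iff.mp h
  have hb₀ : b ≠ 0 := by rintro rfl; simp [eq_comm, hq₂] at hb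
  exact hne (mul_right_cancel₀ hb₀ hab).symm

lemma one_add_two_mul_ne_zero {a : K} (ha : a ^ 2 = q₁) (hq₁ : q₁ ≠ 1 / 4) : 1 + 2 * a ≠ 0 := by
  intro h
  exact hq₁ (eq_one_div_of_mul_eq_one_right (by linear_combination (2 * a - 1) * h - 4 * ha))

variable [IsAlgClosed K] [NeZero (2 : K)]

lemma ncard_criticalBranch {a : K} (ha : 1 + 2 * a ≠ 0) (hq₂ : q₂ ≠ 0) :
    (criticalBranch q₂ a).ncard = 2 := by
  rw [criticalBranch, InjOn.ncard_image fun b _ b' _ h ↦ (Prod.ext_iff.mp h).2]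
  simp_rw [← eq_div_iff ha]
  exact ncard_setOf_sq_eq (div_ne_zero hq₂ ha)

lemma ncard_criticalLocus (hq₁ : q₁ ≠ 0) (hq₁' : q₁ ≠ 1 / 4) (hq₂ : q₂ ≠ 0) :
    (criticalLocus q₁ q₂).ncard = 4 := by
  have hbranch : ∀ a ∈ {a : K | a ^ 2 = q₁}, (criticalBranch q₂ a).ncard = 2 :=
    fun a ha ↦ ncard_criticalBranch (one_add_two_mul_ne_zero ha hq₁') hq₂
  have hroots : {a : K | a ^ 2 = q₁}.Finite :=
    finite_of_ncard_ne_zero (by simp [ncard_setOf_sq_eq hq₁])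
  rw [criticalLocus_eq_biUnion hq₁ hq₂,
    hroots.ncard_biUnion (fun a ha ↦ finite_of_ncard_ne_zero (by simp [hbranch a ha]))
      (pairwiseDisjoint_criticalBranch hq₂ _),
    finsum_mem_congr rfl hbranch]
  obtain ⟨e, rfl⟩ := IsAlgClosed.exists_pow_nat_eq q₁ two_pos
  rw [setOf_sq_eq_sq, finsum_mem_pair (self_ne_neg_of_ne_zero (by rintro rfl; simp at hq₁))]

end

lemma hessian_det_eq {K : Type*} [Field K] {q₁ q₂ u₁ u₂ : K} (hu₁ : u₁ ≠ 0) (hu₂ : u₂ ≠ 0) :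
    (2 * q₁ * u₂ ^ 2 / u₁ ^ 3) * (2 * q₁ / u₁ + 2 * q₂ / u₂ ^ 3) - (2 * q₁ * u₂ / u₁ ^ 2) ^ 2 =
      4 * q₁ * q₂ / (u₁ ^ 3 * u₂) := by
  field_simp
  ring

/-- Tameness lemma of section 9.2.1: for `q₁ ∉ {0, 1/4}` and `q₂ ≠ 0` the
Landau–Ginzburg potential of `𝔽₂` has exactly four critical points on the
torus, all of them non-degenerate. -/
theorem hirzebruch_critical_points
    (q₁ q₂ : ℂ) (hq₁ : q₁ ≠ 0) (hq₁' : q₁ ≠ 1 / 4) (hq₂ : q₂ ≠ 0) :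
    Set.ncard {p : ℂ × ℂ | p.1 ≠ 0 ∧ p.2 ≠ 0 ∧
        1 - q₁ * p.2 ^ 2 / p.1 ^ 2 = 0 ∧
        1 + 2 * q₁ * p.2 / p.1 - q₂ / p.2 ^ 2 = 0} = 4 ∧
    ∀ p : ℂ × ℂ, p.1 ≠ 0 → p.2 ≠ 0 →
      1 - q₁ * p.2 ^ 2 / p.1 ^ 2 = 0 →
      1 + 2 * q₁ * p.2 / p.1 - q₂ / p.2 ^ 2 = 0 →
      (2 * q₁ * p.2 ^ 2 / p.1 ^ 3) * (2 * q₁ / p.1 + 2 * q₂ / p.2 ^ 3)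
        - (2 * q₁ * p.2 / p.1 ^ 2) ^ 2 ≠ 0 := by
  refine ⟨ncard_criticalLocus hq₁ hq₁' hq₂, fun p hu₁ hu₂ _ _ ↦ ?_⟩
  rw [hessian_det_eq hu₁ hu₂]
  exact div_ne_zero (by simp [hq₁, hq₂]) (by simp [hu₁, hu₂])
end

section
/- Let M₁ = [[0,0],[−1,0]] and N = [[0,1],[0,0]] be 2×2 complex matrices, and let H⁰, H¹, H², … be the unique sequence of 2×2 matrices with entries in ℂ[τ] satisfying H⁰ = I and, for each d ≥ 1, d·H^d = τ·(H^d·M₁ − M₁·H^d + N·H^{d−1}). Then for every d ≥ 1, writing 𝗁_d = Σ_{k=1}^{d} 1/k for the d-th harmonic number: H^d₁₁ = (1 − 2d·𝗁_d)·τ^{2d}/(d!)², H^d₁₂ = d·τ^{2d−1}/(d!)², H^d₂₁ = −2·𝗁_d·τ^{2d+1}/(d!)², and H^d₂₂ = τ^{2d}/(d!)². -/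
open Polynomial in
lemma correlator_helper (m : ℕ) (Hd K : Matrix (Fin 2) (Fin 2) (Polynomial ℂ))
    (hE : (((m:ℕ)+1 : ℕ) : Polynomial ℂ) • Hd =
      (X : Polynomial ℂ) • (Hd * !![0, 0; -1, 0] - !![0, 0; -1, 0] * Hd + !![0, 1; 0, 0] * K))
    (hK10 : K 1 0 = C (((-2 * harmonic m / (m.factorial ^ 2 : ℚ)) : ℚ) : ℂ) * X ^ (2 * m + 1))
    (hK11 : K 1 1 = C (((1 / (m.factorial ^ 2 : ℚ)) : ℚ) : ℂ) * X ^ (2 * m)) :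
    Hd = !![C ((((1 - 2 * ((m:ℚ)+1) * harmonic (m+1)) / ((m+1).factorial ^ 2 : ℚ)) : ℚ) : ℂ) * X ^ (2 * m + 2),
            C (((((m:ℚ)+1) / ((m+1).factorial ^ 2 : ℚ)) : ℚ) : ℂ) * X ^ (2 * m + 1);
            C ((((-2 * harmonic (m+1)) / ((m+1).factorial ^ 2 : ℚ)) : ℚ) : ℂ) * X ^ (2 * m + 3),
            C (((1 / ((m+1).factorial ^ 2 : ℚ)) : ℚ) : ℂ) * X ^ (2 * m + 2)] := by
  have hfac : ((m.factorial : ℚ)) ≠ 0 := Nat.cast_ne_zero.mpr m.factorial_ne_zero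
  have hfac1 : (((m+1).factorial : ℚ)) ≠ 0 := Nat.cast_ne_zero.mpr (m+1).factorial_ne_zero
  -- coefficient identities over ℚ
  have qβ : ((m:ℚ)+1) * (((m:ℚ)+1) / ((m+1).factorial^2:ℚ)) = 1 / (m.factorial^2:ℚ) := by
    rw [Nat.factorial_succ]; push_cast; field_simp
  have qδ : ((m:ℚ)+1) * (1 / ((m+1).factorial^2:ℚ)) = ((m:ℚ)+1) / ((m+1).factorial^2:ℚ) := by
    ring
  have qα : ((m:ℚ)+1) * ((1 - 2 * ((m:ℚ)+1) * harmonic (m+1)) / ((m+1).factorial^2:ℚ))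
      = -(((m:ℚ)+1) / ((m+1).factorial^2:ℚ)) + (-2 * harmonic m / (m.factorial^2:ℚ)) := by
    rw [harmonic_succ, Nat.factorial_succ]
    have hm1 : ((m:ℚ)+1) ≠ 0 := by positivity
    push_cast
    field_simp
    ring
  have qγ : ((m:ℚ)+1) * (-2 * harmonic (m+1) / ((m+1).factorial^2:ℚ))
      = (1 - 2 * ((m:ℚ)+1) * harmonic (m+1)) / ((m+1).factorial^2:ℚ)
        - 1 / ((m+1).factorial^2:ℚ) := by
    field_simp; ring
  have hC : ((m : Polynomial ℂ) + 1) = C ((m:ℂ)+1) := by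
    simp [map_add, map_natCast]
  have hd0' : ((m : Polynomial ℂ) + 1) ≠ 0 := by
    rw [hC]
    exact Polynomial.C_ne_zero.mpr (Nat.cast_add_one_ne_zero m)
  -- entry equations
  have h00 := congrFun (congrFun hE 0) 0
  have h01 := congrFun (congrFun hE 0) 1
  have h10 := congrFun (congrFun hE 1) 0
  have h11 := congrFun (congrFun hE 1) 1
  simp [Matrix.mul_apply, Fin.sum_univ_two, Matrix.vecMul, dotProduct,
    Matrix.smul_apply, smul_eq_mul] at h00 h01 h10 h11
  rw [hK11] at h01
  rw [hK10] at h00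
  -- entry (0,1)
  have hb : Hd 0 1 = C (((((m:ℚ)+1) / ((m+1).factorial ^ 2 : ℚ)) : ℚ) : ℂ) * X ^ (2 * m + 1) := by
    have hcoef : ((m:ℂ)+1) * (((((m:ℚ)+1) / ((m+1).factorial ^ 2 : ℚ)) : ℚ) : ℂ)
        = (((1 / (m.factorial ^ 2 : ℚ)) : ℚ) : ℂ) := by exact_mod_cast qβ
    have hcoefC := (map_mul C ((m:ℂ)+1) _).symm.trans (congrArg C hcoef)
    refine mul_left_cancel₀ hd0' ?_
    rw [h01, hC]
    linear_combination (-(X : Polynomial ℂ)^(2*m+1)) * hcoefC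
  -- entry (1,1)
  have he : Hd 1 1 = C (((1 / ((m+1).factorial ^ 2 : ℚ)) : ℚ) : ℂ) * X ^ (2 * m + 2) := by
    have hcoef : ((m:ℂ)+1) * (((1 / ((m+1).factorial ^ 2 : ℚ)) : ℚ) : ℂ)
        = (((((m:ℚ)+1) / ((m+1).factorial ^ 2 : ℚ)) : ℚ) : ℂ) := by exact_mod_cast qδ
    have hcoefC := (map_mul C ((m:ℂ)+1) _).symm.trans (congrArg C hcoef)
    refine mul_left_cancel₀ hd0' ?_
    rw [h11, hb, hC]
    linear_combination (-(X : Polynomial ℂ)^(2*m+2)) * hcoefC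
  -- entry (0,0)
  have ha : Hd 0 0 = C ((((1 - 2 * ((m:ℚ)+1) * harmonic (m+1)) / ((m+1).factorial ^ 2 : ℚ)) : ℚ) : ℂ)
      * X ^ (2 * m + 2) := by
    have hcoef : ((m:ℂ)+1) * ((((1 - 2 * ((m:ℚ)+1) * harmonic (m+1)) / ((m+1).factorial ^ 2 : ℚ)) : ℚ) : ℂ)
        = -(((((m:ℚ)+1) / ((m+1).factorial ^ 2 : ℚ)) : ℚ) : ℂ)
          + (((-2 * harmonic m / (m.factorial ^ 2 : ℚ)) : ℚ) : ℂ) := by exact_mod_cast qα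
    have hcoefC : C ((m:ℂ)+1) * C ((((1 - 2 * ((m:ℚ)+1) * harmonic (m+1)) / ((m+1).factorial ^ 2 : ℚ)) : ℚ) : ℂ)
        = -C (((((m:ℚ)+1) / ((m+1).factorial ^ 2 : ℚ)) : ℚ) : ℂ)
          + C ((((-2 * harmonic m / (m.factorial ^ 2 : ℚ))) : ℚ) : ℂ) := by
      rw [← map_mul, hcoef, map_add, map_neg]
    refine mul_left_cancel₀ hd0' ?_
    rw [h00, hb, hC]
    linear_combination (-(X : Polynomial ℂ)^(2*m+2)) * hcoefC
  -- entry (1,0)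
  have hc : Hd 1 0 = C ((((-2 * harmonic (m+1)) / ((m+1).factorial ^ 2 : ℚ)) : ℚ) : ℂ)
      * X ^ (2 * m + 3) := by
    have hcoef : ((m:ℂ)+1) * ((((-2 * harmonic (m+1)) / ((m+1).factorial ^ 2 : ℚ)) : ℚ) : ℂ)
        = ((((1 - 2 * ((m:ℚ)+1) * harmonic (m+1)) / ((m+1).factorial ^ 2 : ℚ)) : ℚ) : ℂ)
          - (((1 / ((m+1).factorial ^ 2 : ℚ)) : ℚ) : ℂ) := by exact_mod_cast qγ
    have hcoefC : C ((m:ℂ)+1) * C ((((-2 * harmonic (m+1)) / ((m+1).factorial ^ 2 : ℚ)) : ℚ) : ℂ)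
        = C ((((1 - 2 * ((m:ℚ)+1) * harmonic (m+1)) / ((m+1).factorial ^ 2 : ℚ)) : ℚ) : ℂ)
          - C (((1 / ((m+1).factorial ^ 2 : ℚ)) : ℚ) : ℂ) := by
      rw [← map_mul, hcoef, map_sub]
    refine mul_left_cancel₀ hd0' ?_
    rw [h10, ha, he, hC]
    linear_combination (-(X : Polynomial ℂ)^(2*m+3)) * hcoefC
  rw [Matrix.eta_fin_two Hd, ha, hb, hc, he]


open Polynomial in
/-- Example 10.4: the correlator matrices `H^d` of the mirror of `ℙ¹`,
determined by the recursion `d·H^d = τ(H^d M₁ - M₁ H^d + N H^{d-1})` with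
`H⁰ = I`, are given explicitly in terms of harmonic numbers. -/
theorem correlator_matrix_P1
    (M₁ N : Matrix (Fin 2) (Fin 2) (Polynomial ℂ))
    (hM₁ : M₁ = !![0, 0; -1, 0])
    (hN : N = !![0, 1; 0, 0])
    (H : ℕ → Matrix (Fin 2) (Fin 2) (Polynomial ℂ))
    (h0 : H 0 = 1)
    (hrec : ∀ d : ℕ, 1 ≤ d →
      (d : Polynomial ℂ) • H d = (X : Polynomial ℂ) • (H d * M₁ - M₁ * H d + N * H (d - 1)))
    (d : ℕ) (hd : 1 ≤ d) :
    H d = !![C ((((1 - 2 * d * harmonic d) / (d.factorial ^ 2 : ℚ)) : ℚ) : ℂ) * X ^ (2 * d),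
             C ((((d : ℚ) / (d.factorial ^ 2 : ℚ)) : ℚ) : ℂ) * X ^ (2 * d - 1);
             C ((((-2 * harmonic d) / (d.factorial ^ 2 : ℚ)) : ℚ) : ℂ) * X ^ (2 * d + 1),
             C (((1 / (d.factorial ^ 2 : ℚ)) : ℚ) : ℂ) * X ^ (2 * d)] := by
  subst hM₁ hN
  induction d, hd using Nat.le_induction with
  | base =>
    have h := correlator_helper 0 (H 1) (H 0) (by simpa using hrec 1 le_rfl)
      (by simp [h0]) (by simp [h0])
    rw [h]
    norm_num
  | succ d hd ih =>
    have h := correlator_helper d (H (d+1)) (H d)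
      (by simpa using hrec (d+1) (by omega))
      (by rw [ih]; norm_num)
      (by rw [ih]; norm_num)
    rw [h, show 2*(d+1) - 1 = 2*d+1 from rfl]
    congr 2 <;> push_cast <;> ring_nf
end

section
/- Let n ≥ 1, let w₀ = 1 and w₁, …, wₙ be positive integers, define a : ℕ → ℕ^{n+1} by a(0) = (0,…,0) and a(k+1) = a(k) + e_{i(k)}, where i(k) is the smallest index i minimizing a(k)_i / w_i, set μ = w₀ + w₁ + ⋯ + wₙ, c_k = min_{0 ≤ i ≤ n} a(k)_i / w_i ∈ ℚ, and α_k = k − μ·c_k for 0 ≤ k ≤ μ−1. Then the multiset {α_k : 0 ≤ k ≤ μ−1} of rational numbers is symmetric about n/2, i.e. it equals the multiset {n − α_k : 0 ≤ k ≤ μ−1}. -/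
/-! The greedy walk visits the pairs `(j, m)`, `m : ℕ`, in increasing order of `m / w j`, so
its ratio `c k` at step `k` is the unique `r` with `countLT w r ≤ k < countLE w r`. For `t : ℤ`,
the reflection `r ↦ t - r` exchanges these two counts up to the shift `t μ + (n + 1)`; hence
`c k' = t - c k` whenever `k' = n - k + t μ`, which is `α k' = n - α k`, and `k ↦ n - k mod μ`
permutes `{0, …, μ - 1}`. -/

theorem Multiset.map_range_eq_map_of_reflect {β : Type*} {f g : ℕ → β} {μ : ℕ} (m : ℤ)
    (h : ∀ k k' : ℕ, ∀ t : ℤ, (k' : ℤ) = m - k + t * μ → f k = g k') :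
    (Multiset.range μ).map f = (Multiset.range μ).map g := by
  set σ : ℕ → ℕ := fun k => ((m - k) % μ).toNat
  have hσ : ∀ k < μ, (σ k : ℤ) = (m - k) % μ ∧ σ k < μ := fun k hk => by
    have h0 := Int.emod_nonneg (m - k) (b := μ) (by omega)
    have h1 := Int.emod_lt_of_pos (m - k) (b := μ) (by omega)
    have he : (σ k : ℤ) = (m - k) % μ := Int.toNat_of_nonneg h0
    exact ⟨he, by omega⟩
  have hσσ : ∀ k < μ, σ (σ k) = k := fun k hk => by
    have hσσk := hσ (σ k) (hσ k hk).2
    rw [(hσ k hk).1, Int.sub_emod, Int.emod_emod, ← Int.sub_emod, sub_sub_cancel,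
      Int.emod_eq_of_lt (by omega) (by omega)] at hσσk
    omega
  refine Multiset.map_eq_map_of_bij_of_nodup f g (Multiset.nodup_range μ) (Multiset.nodup_range μ)
    (fun k _ => σ k) (fun k hk => ?_) (fun k₁ hk₁ k₂ hk₂ he => ?_) (fun k hk => ?_)
    (fun k hk => h k (σ k) (-((m - k) / μ)) ?_)
  all_goals simp only [Multiset.mem_range] at *
  · exact (hσ k hk).2
  · rw [← hσσ k₁ hk₁, ← hσσ k₂ hk₂, he]
  · exact ⟨σ k, (hσ k hk).2, hσσ k hk⟩
  · rw [(hσ k hk).1, Int.emod_def]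
    ring

namespace WeightedGreedy

open Finset

section Counts

variable {ι : Type*} [Fintype ι] (w : ι → ℕ)

/-- For `r ≥ 0`, `countLT w r` and `countLE w r` count the pairs `(j, m)` with `m : ℕ` and
`m / w j < r`, resp. `m / w j ≤ r`. -/
def countLT (r : ℚ) : ℤ := ∑ j, ⌈r * w j⌉

def countLE (r : ℚ) : ℤ := ∑ j, (⌊r * w j⌋ + 1)

variable {w}

theorem countLE_le_countLT_of_lt (hw : ∀ j, 0 < w j) {r r' : ℚ} (h : r < r') :
    countLE w r ≤ countLT w r' := by
  refine sum_le_sum fun j _ => Int.add_one_le_of_lt ((Int.cast_lt (R := ℚ)).1 ?_)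
  calc (⌊r * w j⌋ : ℚ) ≤ r * w j := Int.floor_le _
    _ < r' * w j := mul_lt_mul_of_pos_right h (by exact_mod_cast hw j)
    _ ≤ ⌈r' * w j⌉ := Int.le_ceil _

theorem eq_of_mem_Ico_countLT_countLE (hw : ∀ j, 0 < w j) {r r' : ℚ} {k : ℤ}
    (hk : k ∈ Set.Ico (countLT w r) (countLE w r))
    (hk' : k ∈ Set.Ico (countLT w r') (countLE w r')) : r = r' := by
  rw [Set.mem_Ico] at hk hk'
  rcases lt_trichotomy r r' with h | h | h
  · linarith [countLE_le_countLT_of_lt hw h]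
  · exact h
  · linarith [countLE_le_countLT_of_lt hw h]

theorem countLT_intCast_sub (t : ℤ) (r : ℚ) :
    countLT w (t - r) = t * ∑ j, (w j : ℤ) + Fintype.card ι - countLE w r := by
  have hterm : ∀ j, ⌈((t : ℚ) - r) * w j⌉ = t * w j + 1 - (⌊r * w j⌋ + 1) := fun j => by
    rw [show ((t : ℚ) - r) * w j = ((t * w j : ℤ) : ℚ) + -(r * w j) by push_cast; ring,
      Int.ceil_intCast_add, Int.ceil_neg]
    ring
  simp [countLT, countLE, hterm, sum_sub_distrib, sum_add_distrib, mul_sum]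

theorem countLE_intCast_sub (t : ℤ) (r : ℚ) :
    countLE w (t - r) = t * ∑ j, (w j : ℤ) + Fintype.card ι - countLT w r := by
  have hterm : ∀ j, ⌊((t : ℚ) - r) * w j⌋ + 1 = t * w j + 1 - ⌈r * w j⌉ := fun j => by
    rw [show ((t : ℚ) - r) * w j = ((t * w j : ℤ) : ℚ) + -(r * w j) by push_cast; ring,
      Int.floor_intCast_add, Int.floor_neg]
    ring
  simp [countLT, countLE, hterm, sum_sub_distrib, sum_add_distrib, mul_sum]

theorem mem_Ico_countLT_intCast_sub {r : ℚ} {k : ℤ}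
    (hk : k ∈ Set.Ico (countLT w r) (countLE w r)) (t : ℤ) :
    Fintype.card ι - 1 - k + t * ∑ j, (w j : ℤ) ∈
      Set.Ico (countLT w (t - r)) (countLE w (t - r)) := by
  rw [Set.mem_Ico] at hk ⊢
  rw [countLT_intCast_sub, countLE_intCast_sub]
  omega

end Counts

section Greedy

variable {ι : Type*} [DecidableEq ι] {w : ι → ℕ} {a : ℕ → ι → ℕ} {i : ℕ → ι}

theorem sum_apply_eq_of_step [Fintype ι] (ha0 : a 0 = 0)
    (hstep : ∀ k, a (k + 1) = a k + Pi.single (i k) 1) (k : ℕ) : ∑ j, a k j = k := by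
  induction k with
  | zero => simp [ha0]
  | succ k ih => simp [hstep, sum_add_distrib, ih]

theorem sub_one_div_le_of_step (ha0 : a 0 = 0)
    (hmin : ∀ k j, (a k (i k) : ℚ) / w (i k) ≤ (a k j : ℚ) / w j)
    (hstep : ∀ k, a (k + 1) = a k + Pi.single (i k) 1) (k : ℕ) (j j' : ι) :
    ((a k j : ℚ) - 1) / w j ≤ (a k j' : ℚ) / w j' := by
  induction k generalizing j j' with
  | zero =>
    simp only [ha0, Pi.zero_apply, Nat.cast_zero, zero_sub, zero_div]
    exact div_nonpos_of_nonpos_of_nonneg (by norm_num) (Nat.cast_nonneg _)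
  | succ k ih =>
    have hmono : (a k j' : ℚ) / w j' ≤ (a (k + 1) j' : ℚ) / w j' := by
      gcongr
      simp [hstep]
    refine le_trans ?_ hmono
    by_cases hj : j = i k
    · subst hj
      simpa [hstep] using hmin k j'
    · simpa [hstep, Pi.single_apply, hj] using ih j j'

theorem mem_Ico_countLT_countLE_of_step [Fintype ι] (hw : ∀ j, 0 < w j) (ha0 : a 0 = 0)
    (hmin : ∀ k j, (a k (i k) : ℚ) / w (i k) ≤ (a k j : ℚ) / w j)
    (hstep : ∀ k, a (k + 1) = a k + Pi.single (i k) 1) (k : ℕ) :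
    (k : ℤ) ∈ Set.Ico (countLT w ((a k (i k) : ℚ) / w (i k)))
      (countLE w ((a k (i k) : ℚ) / w (i k))) := by
  set c : ℚ := (a k (i k) : ℚ) / w (i k)
  have hwq : ∀ j, (0 : ℚ) < w j := fun j => by exact_mod_cast hw j
  have hk : (k : ℤ) = ∑ j, (a k j : ℤ) := by
    exact_mod_cast (sum_apply_eq_of_step ha0 hstep k).symm
  have hceil : ∀ j, ⌈c * w j⌉ ≤ a k j := fun j => by
    rw [Int.ceil_le, Int.cast_natCast, ← le_div_iff₀ (hwq j)]
    exact hmin k j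
  have hfloor : ∀ j, (a k j : ℤ) ≤ ⌊c * w j⌋ + 1 := fun j => by
    rw [← sub_le_iff_le_add, Int.le_floor, Int.cast_sub, Int.cast_natCast, Int.cast_one,
      ← div_le_iff₀ (hwq j)]
    exact sub_one_div_le_of_step ha0 hmin hstep k j (i k)
  have hfloor_min : ⌊c * w (i k)⌋ = a k (i k) := by
    rw [div_mul_cancel₀ _ (hwq (i k)).ne', Int.floor_natCast]
  rw [Set.mem_Ico, hk]
  exact ⟨sum_le_sum fun j _ => hceil j,
    sum_lt_sum (fun j _ => hfloor j) ⟨i k, mem_univ _, by omega⟩⟩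

theorem div_eq_intCast_sub_of_step [Fintype ι] (hw : ∀ j, 0 < w j) (ha0 : a 0 = 0)
    (hmin : ∀ k j, (a k (i k) : ℚ) / w (i k) ≤ (a k j : ℚ) / w j)
    (hstep : ∀ k, a (k + 1) = a k + Pi.single (i k) 1) {k k' : ℕ} {t : ℤ}
    (hk' : (k' : ℤ) = Fintype.card ι - 1 - k + t * ∑ j, (w j : ℤ)) :
    (a k' (i k') : ℚ) / w (i k') = t - (a k (i k) : ℚ) / w (i k) := by
  have hk := mem_Ico_countLT_intCast_sub (mem_Ico_countLT_countLE_of_step hw ha0 hmin hstep k) t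
  rw [← hk'] at hk
  exact eq_of_mem_Ico_countLT_countLE hw (mem_Ico_countLT_countLE_of_step hw ha0 hmin hstep k') hk

end Greedy

end WeightedGreedy

theorem spectrum_symmetry_general {n : ℕ}
    (w : Fin (n + 1) → ℕ) (hw : ∀ j, 0 < w j)
    (a : ℕ → Fin (n + 1) → ℕ) (i : ℕ → Fin (n + 1))
    (ha0 : a 0 = 0)
    (hmin : ∀ k j, (a k (i k) : ℚ) / (w (i k) : ℚ) ≤ (a k j : ℚ) / (w j : ℚ))
    (hstep : ∀ k, a (k + 1) = a k + Pi.single (i k) 1)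
    (c : ℕ → ℚ) (hc : ∀ k, c k = (a k (i k) : ℚ) / (w (i k) : ℚ))
    (μ : ℕ) (hμ : μ = ∑ j, w j)
    (α : ℕ → ℚ) (hα : ∀ k, α k = (k : ℚ) - (μ : ℚ) * c k) :
    (Multiset.range μ).map α = (Multiset.range μ).map (fun k => (n : ℚ) - α k) := by
  refine Multiset.map_range_eq_map_of_reflect n fun k k' t hk' => ?_
  have hc' : c k' = t - c k := by
    rw [hc, hc]
    refine WeightedGreedy.div_eq_intCast_sub_of_step hw ha0 hmin hstep ?_
    simp [hk', hμ]
  have hk'_rat : (k' : ℚ) = n - k + t * μ := by exact_mod_cast hk'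
  rw [hα, hα, hc', hk'_rat]
  ring

/-- Symmetry of the spectrum at infinity (eq. RangeAlpha) for the mirror of
`ℙ(1, w₁, …, wₙ)`: the multiset `{α_k = k - μ·c_k : 0 ≤ k ≤ μ-1}` is
symmetric about `n/2`, i.e. it equals the multiset `{n - α_k}`. -/
theorem spectrum_symmetry {n : ℕ} (hn : 1 ≤ n)
    (w : Fin (n + 1) → ℕ) (hw0 : w 0 = 1) (hw : ∀ j, 0 < w j)
    (a : ℕ → Fin (n + 1) → ℕ) (i : ℕ → Fin (n + 1))
    (ha0 : a 0 = 0)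
    (hmin : ∀ k j, (a k (i k) : ℚ) / (w (i k) : ℚ) ≤ (a k j : ℚ) / (w j : ℚ))
    (hleast : ∀ k j,
      (a k j : ℚ) / (w j : ℚ) = (a k (i k) : ℚ) / (w (i k) : ℚ) → i k ≤ j)
    (hstep : ∀ k, a (k + 1) = a k + Pi.single (i k) 1)
    (c : ℕ → ℚ) (hc : ∀ k, c k = (a k (i k) : ℚ) / (w (i k) : ℚ))
    (μ : ℕ) (hμ : μ = ∑ j, w j)
    (α : ℕ → ℚ) (hα : ∀ k, α k = (k : ℚ) - (μ : ℚ) * c k) :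
    (Multiset.range μ).map α = (Multiset.range μ).map (fun k => (n : ℚ) - α k) :=
  spectrum_symmetry_general w hw a i ha0 hmin hstep c hc μ hμ α hα
end
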